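/- arXiv:1702.04304 — 3 statements merged into one kernel-verified Lean document; each statement's English description precedes it below -/
import Mathlib

section
/- For a partial itinerary I of an OPMPC instance, the potential score pot(I) = score(I) + extra(I) is an upper bound on the score of any complete itinerary extending I, where extra(I) sums, for each category k, the (max_k - u_k) highest scores among POIs of category k not in I (with u_k the number of category-k POIs in I). -/
/-!
The POIs of `I' \ I` of category `k` lie in `P \ I`, and there are at most `max_k - u_k` of
them, because `I'` obeys the constraint and already contains the `u_k` category-`k` POIs of `I`.
A sub-multiset of at most `m` nonnegative numbers sums to at most the `m` largest of them, so
their scores sum to at most the `k`-th summand of `extra I`; summing over the categories gives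
`score I' ≤ score I + extra I`.
-/

/-- Sum of the `k` largest elements of a multiset of reals. -/
noncomputable def topSum (S : Multiset ℝ) (k : ℕ) : ℝ :=
  ((S.sort (· ≤ ·)).reverse.take k).sum

/-- The `extra` heuristic: for each category, the sum of the top
`max_k - u_k` scores among remaining POIs of that category. -/
noncomputable def extra {ι K : Type} [DecidableEq ι] [DecidableEq K]
    (P : Finset ι) (Kset : Finset K) (cat : ι → K) (score : ι → ℝ)
    (maxk : K → ℕ) (I : Finset ι) : ℝ :=
  ∑ k ∈ Kset, topSum (((P \ I).filter (fun p => cat p = k)).val.map score)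
      (maxk k - (I.filter (fun p => cat p = k)).card)

/-- Potential score of a (partial) itinerary. -/
noncomputable def pot {ι K : Type} [DecidableEq ι] [DecidableEq K]
    (P : Finset ι) (Kset : Finset K) (cat : ι → K) (score : ι → ℝ)
    (maxk : K → ℕ) (I : Finset ι) : ℝ :=
  (∑ p ∈ I, score p) + extra P Kset cat score maxk I

section

variable {α : Type*} [AddCommMonoid α] [PartialOrder α] [IsOrderedAddMonoid α]

theorem Multiset.sum_le_sum_take_of_le {l : List α} (hl : l.Pairwise (· ≥ ·))
    (hnonneg : ∀ x ∈ l, 0 ≤ x) {T : Multiset α} (hT : T ≤ l) {k : ℕ}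
    (hk : Multiset.card T ≤ k) : T.sum ≤ (l.take k).sum := by
  induction l generalizing T k with
  | nil => simp [Multiset.le_zero.mp (by simpa using hT)]
  | cons b l ih =>
    rcases Multiset.empty_or_exists_mem T with rfl | ⟨a, haT⟩
    · simpa using List.sum_nonneg fun x hx => hnonneg x (List.mem_of_mem_take hx)
    obtain ⟨k, rfl⟩ := Nat.exists_eq_add_one_of_ne_zero
      ((Multiset.card_pos_iff_exists_mem.mpr ⟨a, haT⟩).trans_le hk).ne'
    have hbl : ∀ x ∈ l, x ≤ b := fun x hx => List.rel_of_pairwise_cons hl hx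
    have ih' := @ih hl.of_cons fun x hx => hnonneg x (List.mem_cons_of_mem _ hx)
    rw [List.take_succ_cons, List.sum_cons]
    rw [← Multiset.cons_coe] at hT
    -- Remove from `T` either `b` itself or, if `b ∉ T`, any element, which is then `≤ b`.
    by_cases hb : b ∈ T
    · obtain ⟨T', rfl⟩ := Multiset.exists_cons_of_mem hb
      rw [Multiset.sum_cons]
      exact add_le_add le_rfl (ih' ((Multiset.cons_le_cons_iff b).mp hT) (by simpa using hk))
    · rw [Multiset.le_cons_of_notMem hb] at hT
      obtain ⟨T', rfl⟩ := Multiset.exists_cons_of_mem haT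
      rw [Multiset.sum_cons]
      exact add_le_add (hbl a (Multiset.mem_coe.mp (Multiset.mem_of_le hT haT)))
        (ih' ((Multiset.le_cons_self T' a).trans hT) (by simpa using hk))

end

theorem sum_le_topSum {S T : Multiset ℝ} (hS : ∀ x ∈ S, 0 ≤ x) (hT : T ≤ S) {k : ℕ}
    (hk : Multiset.card T ≤ k) : T.sum ≤ topSum S k := by
  have hcoe : ((S.sort (· ≤ ·)).reverse : Multiset ℝ) = S := by
    rw [Multiset.coe_reverse, Multiset.sort_eq]
  refine Multiset.sum_le_sum_take_of_le ?_ ?_ (by rwa [hcoe]) hk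
  · exact List.pairwise_reverse.mpr (Multiset.pairwise_sort S _)
  · intro x hx
    exact hS x (hcoe ▸ Multiset.mem_coe.mpr hx)

theorem sum_le_topSum_map_of_subset {ι : Type*} {s t : Finset ι} {f : ι → ℝ}
    (hf : ∀ i ∈ t, 0 ≤ f i) (hst : s ⊆ t) {k : ℕ} (hk : s.card ≤ k) :
    ∑ i ∈ s, f i ≤ topSum (t.val.map f) k := by
  refine sum_le_topSum ?_ (Multiset.map_le_map (Finset.val_le_iff.mpr hst)) (by simpa using hk)
  simpa using hf

theorem Finset.card_filter_sdiff_le_sub {ι : Type*} [DecidableEq ι] {s t : Finset ι}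
    (p : ι → Prop) [DecidablePred p] (hst : s ⊆ t) {m : ℕ} (ht : (t.filter p).card ≤ m) :
    ((t \ s).filter p).card ≤ m - (s.filter p).card := by
  have : (t \ s).filter p = t.filter p \ s.filter p := by
    ext; simp only [Finset.mem_filter, Finset.mem_sdiff]; tauto
  rw [this, Finset.card_sdiff_of_subset (Finset.filter_subset_filter p hst)]
  omega

theorem pot_upper_bound_general {ι K : Type} [DecidableEq ι] [DecidableEq K]
    (P : Finset ι) (Kset : Finset K) (cat : ι → K) (score : ι → ℝ)
    (maxk : K → ℕ)
    (hscore : ∀ p, 0 ≤ score p)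
    (hcat : ∀ p ∈ P, cat p ∈ Kset)
    (I I' : Finset ι)
    (hsub : I ⊆ I') (hI'P : I' ⊆ P)
    (hconstr : ∀ k, (I'.filter (fun p => cat p = k)).card ≤ maxk k) :
    (∑ p ∈ I', score p) ≤ pot P Kset cat score maxk I := by
  have hmaps : ∀ p ∈ I' \ I, cat p ∈ Kset := fun p hp => hcat p (hI'P (Finset.sdiff_subset hp))
  calc ∑ p ∈ I', score p
      = ∑ p ∈ I, score p + ∑ k ∈ Kset, ∑ p ∈ (I' \ I).filter (fun p => cat p = k), score p := by
        rw [Finset.sum_fiberwise_of_maps_to hmaps, add_comm, Finset.sum_sdiff hsub]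
    _ ≤ pot P Kset cat score maxk I := by
        unfold pot extra
        gcongr with k
        exact sum_le_topSum_map_of_subset (fun p _ => hscore p)
          (Finset.filter_subset_filter _ (Finset.sdiff_subset_sdiff hI'P subset_rfl))
          (Finset.card_filter_sdiff_le_sub _ hsub (hconstr k))

/-- the potential score of a partial itinerary upper-bounds
the score of any complete itinerary extending it. -/
theorem pot_upper_bound {ι K : Type} [DecidableEq ι] [DecidableEq K]
    (P : Finset ι) (Kset : Finset K) (cat : ι → K) (score : ι → ℝ)
    (maxk : K → ℕ)
    (hscore : ∀ p, 0 ≤ score p)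
    (hcat : ∀ p ∈ P, cat p ∈ Kset)
    (I I' : Finset ι)
    (hIP : I ⊆ P) (hsub : I ⊆ I') (hI'P : I' ⊆ P)
    (hconstr : ∀ k, (I'.filter (fun p => cat p = k)).card ≤ maxk k) :
    (∑ p ∈ I', score p) ≤ pot P Kset cat score maxk I :=
  pot_upper_bound_general P Kset cat score maxk hscore hcat I I' hsub hI'P hconstr
end

section
/- Adding one POI never increases potential score: if I' = I ∪ {p} with p ∉ I and I' satisfies all category constraints, then score(p) + extra(I') ≤ extra(I), and hence pot(I') ≤ pot(I). -/
/-!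
Only the summand of `extra` for the category `c` of `p` changes. If `m` slots of `c` remain free
after adding `p`, then `m + 1` were free before; `p` together with the best `m` remaining candidates
of category `c` is a choice of at most `m + 1` of the previous candidates, so, scores being
nonnegative, its total is at most the sum of their best `m + 1` scores.
-/

theorem List.Sublist.sum_take_le_sum_take {α : Type*} [AddMonoid α] [Preorder α]
    [AddLeftMono α] [AddRightMono α] {M L : List α} (hML : M.Sublist L)
    (hL : L.Pairwise (· ≥ ·)) (h0 : ∀ x ∈ L, 0 ≤ x) (k : ℕ) :
    (M.take k).sum ≤ (L.take k).sum := by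
  induction L generalizing M k with
  | nil => simp [List.sublist_nil.mp hML]
  | cons a L ih =>
    obtain ⟨ha_ge, hL⟩ := List.pairwise_cons.mp hL
    have hL0 : ∀ x ∈ L, 0 ≤ x := fun x hx => h0 x (List.mem_cons_of_mem _ hx)
    cases k with
    | zero => simp
    | succ k =>
      rw [List.take_succ_cons, List.sum_cons]
      rcases List.sublist_cons_iff.mp hML with hML | ⟨r, rfl, hr⟩
      · cases M with
        | nil =>
          exact add_nonneg (h0 a List.mem_cons_self)
            (List.sum_nonneg fun x hx => hL0 x (List.take_subset k L hx))
        | cons b M =>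
          rw [List.take_succ_cons, List.sum_cons]
          exact add_le_add (ha_ge b (hML.subset List.mem_cons_self))
            (ih ((List.sublist_cons_self b M).trans hML) hL hL0 k)
      · rw [List.take_succ_cons, List.sum_cons]
        exact add_le_add_right (ih hr hL hL0 k) a

theorem sum_le_topSum_s2 {t S : Multiset ℝ} (hts : t ≤ S) {k : ℕ} (hk : t.card ≤ k)
    (h0 : ∀ x ∈ S, 0 ≤ x) : t.sum ≤ topSum S k := by
  have hsub : (t.sort (· ≤ ·)).Sublist (S.sort (· ≤ ·)) := by
    refine List.sublist_of_subperm_of_pairwise ?_ (Multiset.pairwise_sort _ _)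
      (Multiset.pairwise_sort _ _)
    rwa [← Multiset.coe_le, Multiset.sort_eq, Multiset.sort_eq]
  have hlen : (t.sort (· ≤ ·)).reverse.length ≤ k := by
    rwa [List.length_reverse, Multiset.length_sort]
  calc t.sum = ((t.sort (· ≤ ·)).reverse.take k).sum := by
        rw [List.take_of_length_le hlen, List.sum_reverse, ← Multiset.sum_coe, Multiset.sort_eq]
    _ ≤ topSum S k :=
      hsub.reverse.sum_take_le_sum_take
        (List.pairwise_reverse.mpr (Multiset.pairwise_sort S _))
        (fun x hx => h0 x (by rwa [List.mem_reverse, Multiset.mem_sort] at hx)) k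

theorem exists_le_card_le_sum_eq_topSum (S : Multiset ℝ) (k : ℕ) :
    ∃ t ≤ S, t.card ≤ k ∧ t.sum = topSum S k := by
  refine ⟨((S.sort (· ≤ ·)).reverse.take k : List ℝ), ?_, ?_, Multiset.sum_coe _⟩
  · conv_rhs => rw [← Multiset.sort_eq S (· ≤ ·), ← Multiset.coe_reverse]
    exact Multiset.coe_le.mpr (List.take_sublist _ _).subperm
  · rw [Multiset.coe_card]
    exact List.length_take_le _ _

theorem add_topSum_le_topSum_cons {x : ℝ} {T : Multiset ℝ} (h0 : ∀ y ∈ x ::ₘ T, 0 ≤ y)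
    (m : ℕ) : x + topSum T m ≤ topSum (x ::ₘ T) (m + 1) := by
  obtain ⟨t, htT, htm, ht⟩ := exists_le_card_le_sum_eq_topSum T m
  have := sum_le_topSum_s2 (Multiset.cons_le_cons x htT) (k := m + 1)
    (by rw [Multiset.card_cons]; omega) h0
  rwa [Multiset.sum_cons, ht] at this

theorem add_topSum_erase_le_topSum {ι : Type*} [DecidableEq ι] {score : ι → ℝ}
    (hscore : ∀ q, 0 ≤ score q) {A : Finset ι} {p : ι} (hp : p ∈ A) (m : ℕ) :
    score p + topSum ((A.erase p).val.map score) m ≤ topSum (A.val.map score) (m + 1) := by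
  have hA : A.val.map score = score p ::ₘ (A.erase p).val.map score := by
    rw [← Multiset.map_cons, ← Finset.insert_val_of_notMem (Finset.notMem_erase p A),
      Finset.insert_erase hp]
  rw [hA]
  exact add_topSum_le_topSum_cons (by simp [hscore]) m

section

variable {ι K : Type} [DecidableEq ι] [DecidableEq K] (P : Finset ι) (cat : ι → K)
  (score : ι → ℝ) (maxk : K → ℕ)

noncomputable def extraTerm (I : Finset ι) (k : K) : ℝ :=
  topSum (((P \ I).filter (fun p => cat p = k)).val.map score)
    (maxk k - (I.filter (fun p => cat p = k)).card)

theorem extra_eq_sum_extraTerm (Kset : Finset K) (I : Finset ι) :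
    extra P Kset cat score maxk I = ∑ k ∈ Kset, extraTerm P cat score maxk I k :=
  rfl

theorem extraTerm_insert_of_ne {I : Finset ι} {p : ι} {k : K} (hk : cat p ≠ k) :
    extraTerm P cat score maxk (insert p I) k = extraTerm P cat score maxk I k := by
  have hpk : p ∉ (P \ I).filter (fun q => cat q = k) := fun h => hk (Finset.mem_filter.mp h).2
  rw [extraTerm, extraTerm, Finset.filter_insert, if_neg hk, Finset.sdiff_insert,
    Finset.filter_erase, Finset.erase_eq_of_notMem hpk]

theorem score_add_extraTerm_insert_le (hscore : ∀ q, 0 ≤ score q) {I : Finset ι} {p : ι}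
    (hpP : p ∈ P) (hp : p ∉ I)
    (hconstr : ((insert p I).filter (fun q => cat q = cat p)).card ≤ maxk (cat p)) :
    score p + extraTerm P cat score maxk (insert p I) (cat p)
      ≤ extraTerm P cat score maxk I (cat p) := by
  have hcount : ((insert p I).filter (fun q => cat q = cat p)).card
      = (I.filter (fun q => cat q = cat p)).card + 1 := by
    rw [Finset.filter_insert, if_pos rfl, Finset.card_insert_of_notMem]
    simp [hp]
  have hfree : maxk (cat p) - (I.filter (fun q => cat q = cat p)).card
      = maxk (cat p) - ((insert p I).filter (fun q => cat q = cat p)).card + 1 := by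
    omega
  have hpA : p ∈ (P \ I).filter (fun q => cat q = cat p) := by simp [hpP, hp]
  rw [extraTerm, extraTerm, hfree, Finset.sdiff_insert, Finset.filter_erase]
  exact add_topSum_erase_le_topSum hscore hpA _

end

theorem pot_insert_le_general {ι K : Type} [DecidableEq ι] [DecidableEq K]
    (P : Finset ι) (Kset : Finset K) (cat : ι → K) (score : ι → ℝ)
    (maxk : K → ℕ)
    (hscore : ∀ q, 0 ≤ score q)
    (hcat : ∀ q ∈ P, cat q ∈ Kset)
    (I : Finset ι) (p : ι)
    (hpP : p ∈ P) (hp : p ∉ I)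
    (hconstr : ∀ k, ((insert p I).filter (fun q => cat q = k)).card ≤ maxk k) :
    score p + extra P Kset cat score maxk (insert p I)
        ≤ extra P Kset cat score maxk I ∧
    pot P Kset cat score maxk (insert p I) ≤ pot P Kset cat score maxk I := by
  have hextra : score p + extra P Kset cat score maxk (insert p I)
      ≤ extra P Kset cat score maxk I := by
    have hp_cat := score_add_extraTerm_insert_le P cat score maxk hscore hpP hp (hconstr (cat p))
    have hrest : ∀ k ∈ Kset.erase (cat p),
        extraTerm P cat score maxk (insert p I) k = extraTerm P cat score maxk I k :=
      fun k hk => extraTerm_insert_of_ne P cat score maxk (Finset.ne_of_mem_erase hk).symm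
    rw [extra_eq_sum_extraTerm, extra_eq_sum_extraTerm, ← Finset.add_sum_erase _ _ (hcat p hpP),
      ← Finset.add_sum_erase _ _ (hcat p hpP), Finset.sum_congr rfl hrest]
    linarith
  refine ⟨hextra, ?_⟩
  rw [pot, pot, Finset.sum_insert hp]
  linarith

/-- adding one POI never increases the potential score. -/
theorem pot_insert_le {ι K : Type} [DecidableEq ι] [DecidableEq K]
    (P : Finset ι) (Kset : Finset K) (cat : ι → K) (score : ι → ℝ)
    (maxk : K → ℕ)
    (hscore : ∀ q, 0 ≤ score q)
    (hcat : ∀ q ∈ P, cat q ∈ Kset)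
    (I : Finset ι) (p : ι)
    (hIP : I ⊆ P) (hpP : p ∈ P) (hp : p ∉ I)
    (hconstr : ∀ k, ((insert p I).filter (fun q => cat q = k)).card ≤ maxk k) :
    score p + extra P Kset cat score maxk (insert p I)
        ≤ extra P Kset cat score maxk I ∧
    pot P Kset cat score maxk (insert p I) ≤ pot P Kset cat score maxk I :=
  pot_insert_le_general P Kset cat score maxk hscore hcat I p hpP hp hconstr
end

section
/- Termination criterion correctness: if the maximum potential score among all partial solutions remaining in the queue is at most score(b) for the current best complete solution b, and every complete solution is either already examined or extends some solution in the queue, then b is optimal. -/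
/-- termination criterion correctness: if every partial solution
remaining in the queue has potential at most `score b`, and every complete
solution is either already examined (and hence scores at most `score b`) or
extends some queue element, then `b` is optimal. -/
theorem termination_correct {σ π : Type}
    (S : Finset σ)                        -- complete solutions
    (score : σ → ℝ) (hnn : ∀ s, 0 ≤ score s)
    (pot : π → ℝ)
    (ext : σ → π → Prop)
    (hadm : ∀ s I, ext s I → score s ≤ pot I)
    (b : σ) (hb : b ∈ S)
    (E : Set σ) (hbE : b ∈ E)             -- examined solutions
    (hbest : ∀ s ∈ E, score s ≤ score b)  -- b is best among examined
    (Q : Set π)                           -- queue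
    (hQ : ∀ I ∈ Q, pot I ≤ score b)
    (hcover : ∀ s ∈ S, s ∈ E ∨ ∃ I ∈ Q, ext s I) :
    ∀ s ∈ S, score s ≤ score b := by
  intro s hs
  rcases hcover s hs with h | ⟨I, hI, he⟩
  · exact hbest s h
  · exact (hadm s I he).trans (hQ I hI)
end
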